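/- arXiv:1407.2063 — 6 statements merged into one kernel-verified Lean document; each statement's English description precedes it below -/
import Mathlib

section
/- For the standard (n-1)-simplex in R^n with vertices e_1,...,e_n, the point minimizing (sum over i of d(q, e_i)^ρ)^{1/ρ} over all q in R^n is the barycenter o = (1/n,...,1/n), and the minimal value equals n^{1/ρ} · sqrt((n-1)/n). -/
/-!
Let `c = √((n-1)/n)` be the common distance from the barycenter `o` to the vertices `eᵢ`.
Since `∑ (eᵢ - o) = 0`, for every `q` we get
`n c² = ∑ ⟪eᵢ - q, eᵢ - o⟫ ≤ c ∑ d(q, eᵢ)`, so the mean distance from `q` to the vertices is at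
least `c`; the power-mean inequality then gives `∑ d(q, eᵢ)^ρ ≥ n c^ρ = ∑ d(o, eᵢ)^ρ`.
-/

open Finset
open scoped InnerProductSpace

theorem card_mul_rpow_le_sum_rpow {ι : Type*} {s : Finset ι} {f : ι → ℝ} {r ρ : ℝ}
    (hf : ∀ i ∈ s, 0 ≤ f i) (hr : 0 ≤ r) (hρ : 1 ≤ ρ) (hmean : #s * r ≤ ∑ i ∈ s, f i) :
    #s * r ^ ρ ≤ ∑ i ∈ s, f i ^ ρ := by
  rcases s.eq_empty_or_nonempty with rfl | hs
  · simp
  have hcard : (0 : ℝ) < #s := by exact_mod_cast hs.card_pos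
  have hpow : (#s : ℝ) ^ (ρ - 1) * (#s * r ^ ρ) ≤ (#s : ℝ) ^ (ρ - 1) * ∑ i ∈ s, f i ^ ρ :=
    calc (#s : ℝ) ^ (ρ - 1) * (#s * r ^ ρ) = (#s * r) ^ ρ := by
          rw [← mul_assoc, ← Real.rpow_add_one hcard.ne', sub_add_cancel,
            Real.mul_rpow hcard.le hr]
      _ ≤ (∑ i ∈ s, f i) ^ ρ := by gcongr
      _ ≤ (#s : ℝ) ^ (ρ - 1) * ∑ i ∈ s, f i ^ ρ :=
          Real.rpow_sum_le_const_mul_sum_rpow_of_nonneg s hρ hf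
  exact le_of_mul_le_mul_left hpow (by positivity)

section InnerProductSpace

variable {E ι : Type*} [NormedAddCommGroup E] [InnerProductSpace ℝ E]

theorem card_mul_le_sum_dist_of_sum_sub_eq_zero {s : Finset ι} {p : ι → E} {o : E} {r : ℝ}
    (hsum : ∑ i ∈ s, (p i - o) = 0) (hr : ∀ i ∈ s, ‖p i - o‖ = r) (q : E) :
    #s * r ≤ ∑ i ∈ s, dist q (p i) := by
  have hsq : #s * r ^ 2 ≤ (∑ i ∈ s, dist q (p i)) * r :=
    calc #s * r ^ 2 = ∑ i ∈ s, ⟪p i - o, p i - o⟫_ℝ := by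
          rw [← nsmul_eq_mul, ← sum_const]
          exact sum_congr rfl fun i hi => by rw [real_inner_self_eq_norm_sq, hr i hi]
      _ = ∑ i ∈ s, ⟪p i - q, p i - o⟫_ℝ + ⟪q - o, ∑ i ∈ s, (p i - o)⟫_ℝ := by
          rw [inner_sum, ← sum_add_distrib]
          exact sum_congr rfl fun i _ => by
            rw [← inner_add_left, sub_add_sub_cancel]
      _ ≤ ∑ i ∈ s, ‖p i - q‖ * ‖p i - o‖ := by
          rw [hsum, inner_zero_right, add_zero]
          exact sum_le_sum fun i _ => real_inner_le_norm _ _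
      _ = (∑ i ∈ s, dist q (p i)) * r := by
          rw [sum_mul]
          exact sum_congr rfl fun i hi => by rw [hr i hi, dist_comm, dist_eq_norm]
  rcases le_or_gt r 0 with hr0 | hr0
  · exact (mul_nonpos_of_nonneg_of_nonpos (Nat.cast_nonneg _) hr0).trans
      (sum_nonneg fun i _ => dist_nonneg)
  · nlinarith

theorem sum_dist_rpow_le_of_sum_sub_eq_zero {s : Finset ι} {p : ι → E} {o : E} {r ρ : ℝ}
    (hsum : ∑ i ∈ s, (p i - o) = 0) (hr : ∀ i ∈ s, ‖p i - o‖ = r) (hρ : 1 ≤ ρ) (q : E) :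
    ∑ i ∈ s, dist o (p i) ^ ρ ≤ ∑ i ∈ s, dist q (p i) ^ ρ := by
  rcases s.eq_empty_or_nonempty with rfl | ⟨j, hj⟩
  · simp
  have hdist : ∀ i ∈ s, dist o (p i) = r := fun i hi => by rw [dist_comm, dist_eq_norm, hr i hi]
  rw [sum_congr rfl fun i hi => by rw [hdist i hi], sum_const, nsmul_eq_mul]
  exact card_mul_rpow_le_sum_rpow (fun i _ => dist_nonneg) (hr j hj ▸ norm_nonneg _) hρ
    (card_mul_le_sum_dist_of_sum_sub_eq_zero hsum hr q)

end InnerProductSpace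

theorem sum_sq_indicator_sub_inv_card {n : ℕ} (i : Fin n) :
    ∑ j : Fin n, ((if j = i then 1 else 0) - 1 / (n : ℝ)) ^ 2 = ((n : ℝ) - 1) / n := by
  have hn : (n : ℝ) ≠ 0 := by exact_mod_cast (Fin.pos i).ne'
  have hsplit : ∀ j : Fin n, ((if j = i then 1 else 0) - 1 / (n : ℝ)) ^ 2
      = (1 / (n : ℝ)) ^ 2 + (if j = i then (1 - 1 / (n : ℝ)) ^ 2 - (1 / (n : ℝ)) ^ 2 else 0) :=
    fun j => by split_ifs <;> ring
  simp only [hsplit, sum_add_distrib, sum_const, sum_ite_eq', mem_univ, if_true, card_univ,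
    Fintype.card_fin, nsmul_eq_mul]
  field_simp
  ring

theorem norm_single_sub_const_inv_card {n : ℕ} (i : Fin n) :
    ‖EuclideanSpace.single i (1 : ℝ) - (WithLp.equiv 2 (Fin n → ℝ)).symm (fun _ => 1 / n)‖
      = √(((n : ℝ) - 1) / n) := by
  rw [EuclideanSpace.norm_eq, ← sum_sq_indicator_sub_inv_card i]
  congr 1
  refine sum_congr rfl fun j _ => ?_
  simp [PiLp.single_apply]

theorem sum_single_sub_const_inv_card (n : ℕ) :
    ∑ i : Fin n,
      (EuclideanSpace.single i (1 : ℝ) - (WithLp.equiv 2 (Fin n → ℝ)).symm (fun _ => 1 / n)) = 0 := by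
  ext j
  have hn : (n : ℝ) ≠ 0 := by exact_mod_cast (Fin.pos j).ne'
  simp [hn]

open Finset in
theorem simplex_optimal_center_general (n : ℕ) (ρ : ℝ) (hρ : 1 ≤ ρ)
    (o : EuclideanSpace ℝ (Fin n)) (ho : o = (WithLp.equiv 2 (Fin n → ℝ)).symm (fun _ => 1/n)) :
    (∀ q : EuclideanSpace ℝ (Fin n),
      (∑ i, dist o (EuclideanSpace.single i (1:ℝ)) ^ ρ) ^ (1/ρ)
        ≤ (∑ i, dist q (EuclideanSpace.single i (1:ℝ)) ^ ρ) ^ (1/ρ)) ∧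
    (∑ i, dist o (EuclideanSpace.single i (1:ℝ)) ^ ρ) ^ (1/ρ)
      = (n : ℝ) ^ (1/ρ) * Real.sqrt (((n : ℝ) - 1) / n) := by
  have hnorm : ∀ i, ‖EuclideanSpace.single i (1 : ℝ) - o‖ = √(((n : ℝ) - 1) / n) :=
    fun i => ho ▸ norm_single_sub_const_inv_card i
  have hcentroid : ∑ i, (EuclideanSpace.single i (1 : ℝ) - o) = 0 :=
    ho ▸ sum_single_sub_const_inv_card n
  have hvalue : ∑ i, dist o (EuclideanSpace.single i (1 : ℝ)) ^ ρ
      = n * √(((n : ℝ) - 1) / n) ^ ρ := by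
    simp only [dist_comm o, dist_eq_norm, hnorm, sum_const, card_univ, Fintype.card_fin,
      nsmul_eq_mul]
  refine ⟨fun q => ?_, ?_⟩
  · exact Real.rpow_le_rpow (sum_nonneg fun i _ => by positivity)
      (sum_dist_rpow_le_of_sum_sub_eq_zero hcentroid (fun i _ => hnorm i) hρ q) (by positivity)
  · rw [hvalue, Real.mul_rpow (Nat.cast_nonneg _) (by positivity), ← Real.rpow_mul (by positivity),
      mul_one_div_cancel (zero_lt_one.trans_le hρ).ne', Real.rpow_one]

open Finset in
theorem simplex_optimal_center (n : ℕ) (hn : 1 ≤ n) (ρ : ℝ) (hρ : 1 ≤ ρ)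
    (o : EuclideanSpace ℝ (Fin n)) (ho : o = (WithLp.equiv 2 (Fin n → ℝ)).symm (fun _ => 1/n)) :
    (∀ q : EuclideanSpace ℝ (Fin n),
      (∑ i, dist o (EuclideanSpace.single i (1:ℝ)) ^ ρ) ^ (1/ρ)
        ≤ (∑ i, dist q (EuclideanSpace.single i (1:ℝ)) ^ ρ) ^ (1/ρ)) ∧
    (∑ i, dist o (EuclideanSpace.single i (1:ℝ)) ^ ρ) ^ (1/ρ)
      = (n : ℝ) ^ (1/ρ) * Real.sqrt (((n : ℝ) - 1) / n) :=
  simplex_optimal_center_general n ρ hρ o ho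
end

section
/- The barycenter o' of e_1,...,e_c is the orthogonal projection of each e_i with i > c onto the affine subspace F spanned by e_1,...,e_c; consequently o' minimizes δ(q) = (Σ_{i=1}^n ‖q - e_i‖^ρ)^{1/ρ} over all q ∈ F. -/
/-!
For `i ≥ c`, the functional `⟪e i - o', ·⟫` takes the same value `-1/c` at every vertex of the
face, hence on all of `F`; so `e i - o'` is orthogonal to `F` and, by Pythagoras, `o'` is the point
of `F` closest to `e i`. The vertices `e j`, `j < c`, are equidistant (at distance `r`) from their
centroid `o'`, and Cauchy–Schwarz against the unit vectors `(e j - o') / r`, which sum to zero,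
shows that `o'` minimises the sum of their distances to a point; the power-mean inequality upgrades
this to the sum of `ρ`-th powers. Thus both parts of `δ(q)^ρ` are minimised at `q = o'`.
-/

open Finset RealInnerProductSpace

section Affine

variable {k V P ι : Type*} [DivisionRing k] [CharZero k] [AddCommGroup V] [Module k V]
  [AddTorsor V P]

theorem centroid_mem_affineSpan_image {s : Finset ι} (hs : s.Nonempty) (p : ι → P) :
    s.centroid k p ∈ affineSpan k (p '' s) :=
  affineCombination_mem_affineSpan_image (s.sum_centroidWeights_eq_one_of_nonempty k hs)
    (fun _ hi hi' => absurd hi hi') p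

end Affine

section InnerProductSpace

variable {E : Type*} [NormedAddCommGroup E] [InnerProductSpace ℝ E]

theorem inner_sub_eq_zero_of_mem_affineSpan {s : Set E} {v : E} {t : ℝ}
    (h : ∀ y ∈ s, ⟪v, y⟫ = t) {x y : E} (hx : x ∈ affineSpan ℝ s) (hy : y ∈ affineSpan ℝ s) :
    ⟪v, x - y⟫ = 0 := by
  have hspan : vectorSpan ℝ s ≤ (ℝ ∙ v)ᗮ := by
    refine Submodule.span_le.2 ?_
    rintro _ ⟨a, ha, b, hb, rfl⟩
    simp [Submodule.mem_orthogonal_singleton_iff_inner_right, inner_sub_right, h a ha, h b hb]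
  exact Submodule.mem_orthogonal_singleton_iff_inner_right.1
    (hspan (vsub_mem_vectorSpan_of_mem_affineSpan_of_mem_affineSpan hx hy))

theorem dist_le_dist_of_inner_sub_eq_zero {o p x : E} (h : ⟪p - o, x - o⟫ = 0) :
    dist o p ≤ dist x p := by
  have hpyth : dist x p ^ 2 = ‖x - o‖ ^ 2 + dist o p ^ 2 := by
    rw [dist_eq_norm, dist_eq_norm, ← sub_sub_sub_cancel_right x p o, norm_sub_sq_real,
      real_inner_comm, h, norm_sub_rev p o]
    ring
  nlinarith [dist_nonneg (x := o) (y := p), dist_nonneg (x := x) (y := p), sq_nonneg ‖x - o‖]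

theorem sum_sub_centroid_eq_zero {ι : Type*} (s : Finset ι) (hs : s.Nonempty) (p : ι → E) :
    ∑ i ∈ s, (p i - s.centroid ℝ p) = 0 := by
  rw [centroid_def, affineCombination_eq_linear_combination _ _ _
    (s.sum_centroidWeights_eq_one_of_nonempty ℝ hs), sum_sub_distrib, sum_const]
  simp only [centroidWeights_apply, ← smul_sum, ← Nat.cast_smul_eq_nsmul ℝ, smul_smul]
  simp [hs.card_ne_zero]

variable {ι : Type*} {s : Finset ι} {p : ι → E} {r : ℝ}

theorem card_mul_le_sum_dist_of_dist_centroid_eq (hr : ∀ i ∈ s, dist (s.centroid ℝ p) (p i) = r)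
    (q : E) : #s * r ≤ ∑ i ∈ s, dist q (p i) := by
  rcases s.eq_empty_or_nonempty with rfl | hs
  · simp
  rcases le_or_gt r 0 with hr0 | hr0
  · exact (mul_nonpos_of_nonneg_of_nonpos (Nat.cast_nonneg _) hr0).trans
      (sum_nonneg fun i _ => dist_nonneg)
  set o := s.centroid ℝ p
  have key : #s * r * r = ∑ i ∈ s, ⟪p i - q, p i - o⟫ := by
    have : ∀ i ∈ s, ⟪p i - q, p i - o⟫ = ⟪o - q, p i - o⟫ + r * r := by
      intro i hi
      rw [← sub_add_sub_cancel (p i) o q, inner_add_left, real_inner_self_eq_norm_mul_norm,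
        ← dist_eq_norm, dist_comm, hr i hi]
      ring
    rw [sum_congr rfl this, sum_add_distrib, ← inner_sum, sum_sub_centroid_eq_zero s hs p]
    simp [mul_assoc]
  have hle : ∑ i ∈ s, ⟪p i - q, p i - o⟫ ≤ (∑ i ∈ s, dist q (p i)) * r := by
    rw [sum_mul]
    refine sum_le_sum fun i hi => (real_inner_le_norm _ _).trans_eq ?_
    rw [← dist_eq_norm, ← dist_eq_norm, dist_comm, dist_comm (p i), hr i hi]
  exact le_of_mul_le_mul_right (key ▸ hle) hr0

theorem sum_dist_centroid_rpow_le (hr : ∀ i ∈ s, dist (s.centroid ℝ p) (p i) = r)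
    {ρ : ℝ} (hρ : 1 ≤ ρ) (q : E) :
    ∑ i ∈ s, dist (s.centroid ℝ p) (p i) ^ ρ ≤ ∑ i ∈ s, dist q (p i) ^ ρ := by
  rcases s.eq_empty_or_nonempty with rfl | hs
  · simp
  have hcard : (0 : ℝ) < #s := by exact_mod_cast hs.card_pos
  have hmean : r ≤ ∑ i ∈ s, (#s : ℝ)⁻¹ * dist q (p i) := by
    rw [← mul_sum, le_inv_mul_iff₀ hcard]
    exact card_mul_le_sum_dist_of_dist_centroid_eq hr q
  have hpow := Real.rpow_arith_mean_le_arith_mean_rpow s (fun _ => (#s : ℝ)⁻¹)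
    (fun i => dist q (p i)) (fun _ _ => by positivity) (by simp [hcard.ne'])
    (fun _ _ => dist_nonneg) hρ
  obtain ⟨i₀, hi₀⟩ := hs
  have hr0 : 0 ≤ r := hr i₀ hi₀ ▸ dist_nonneg
  calc ∑ i ∈ s, dist (s.centroid ℝ p) (p i) ^ ρ = #s * r ^ ρ := by
        rw [sum_congr rfl fun i hi => by rw [hr i hi], sum_const, nsmul_eq_mul]
    _ ≤ #s * ∑ i ∈ s, (#s : ℝ)⁻¹ * dist q (p i) ^ ρ := by
        gcongr
        exact (Real.rpow_le_rpow hr0 hmean (by linarith)).trans hpow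
    _ = ∑ i ∈ s, dist q (p i) ^ ρ := by
        rw [← mul_sum, ← mul_assoc, mul_inv_cancel₀ hcard.ne', one_mul]

end InnerProductSpace

namespace EuclideanSpace

variable {ι : Type*} [Fintype ι] [DecidableEq ι]

theorem centroid_single_one_apply {s : Finset ι} (hs : s.Nonempty) (j : ι) :
    s.centroid ℝ (fun i => single i (1 : ℝ)) j = if j ∈ s then (#s : ℝ)⁻¹ else 0 := by
  rw [centroid_def, affineCombination_eq_linear_combination _ _ _
    (s.sum_centroidWeights_eq_one_of_nonempty ℝ hs)]
  simp [WithLp.ofLp_sum, Pi.single_apply]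

theorem dist_single_one_sq (x : EuclideanSpace ℝ ι) (i : ι) :
    dist x (single i (1 : ℝ)) ^ 2 = ‖x‖ ^ 2 - 2 * x i + 1 := by
  simp [dist_eq_norm, norm_sub_sq_real, inner_single_right]

variable {s : Finset ι}

theorem dist_centroid_single_one (hs : s.Nonempty) {i : ι} (hi : i ∈ s) :
    dist (s.centroid ℝ fun k => single k (1 : ℝ)) (single i 1) =
      √(‖s.centroid ℝ fun k => single k (1 : ℝ)‖ ^ 2 - 2 * (#s : ℝ)⁻¹ + 1) := by
  rw [← Real.sqrt_sq dist_nonneg, dist_single_one_sq, centroid_single_one_apply hs, if_pos hi]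

theorem inner_single_sub_centroid_single (hs : s.Nonempty) {i j : ι} (hi : i ∉ s) (hj : j ∈ s) :
    ⟪single i (1 : ℝ) - s.centroid ℝ (fun k => single k (1 : ℝ)), single j 1⟫ = -(#s : ℝ)⁻¹ := by
  have hij : i ≠ j := fun h => hi (h ▸ hj)
  simp [inner_sub_left, inner_single_right, centroid_single_one_apply hs, hij, hj]

end EuclideanSpace

open Finset RealInnerProductSpace in
theorem face_barycenter_is_projection_and_minimizer (n c : ℕ) (hc : 1 ≤ c) (hcn : c ≤ n)
    (ρ : ℝ) (hρ : 1 ≤ ρ)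
    (o' : EuclideanSpace ℝ (Fin n))
    (ho' : o' = (WithLp.equiv 2 (Fin n → ℝ)).symm (fun j => if (j : ℕ) < c then 1/c else 0))
    (F : AffineSubspace ℝ (EuclideanSpace ℝ (Fin n)))
    (hF : F = affineSpan ℝ {x | ∃ i : Fin n, (i : ℕ) < c ∧ x = EuclideanSpace.single i (1:ℝ)}) :
    o' ∈ F ∧
    (∀ i : Fin n, c ≤ (i : ℕ) → ∀ x ∈ F,
      inner ℝ (EuclideanSpace.single i (1:ℝ) - o') (x - o') = (0:ℝ)) ∧
    (∀ q, q ∈ F →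
      (∑ i, dist o' (EuclideanSpace.single i (1:ℝ)) ^ ρ) ^ (1/ρ)
        ≤ (∑ i, dist q (EuclideanSpace.single i (1:ℝ)) ^ ρ) ^ (1/ρ)) := by
  set e : Fin n → EuclideanSpace ℝ (Fin n) := fun i => EuclideanSpace.single i 1
  set s : Finset (Fin n) := {i | (i : ℕ) < c}
  have hs : s.Nonempty := ⟨⟨0, by omega⟩, mem_filter.2 ⟨mem_univ _, hc⟩⟩
  have hcard : #s = c := by simp [s, Fin.card_filter_val_lt, hcn]
  have ho'_centroid : o' = s.centroid ℝ e := by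
    ext j
    rw [EuclideanSpace.centroid_single_one_apply hs, hcard]
    simp [ho', s]
  have hF_image : F = affineSpan ℝ (e '' s) := by
    rw [hF]; congr 1; ext x; simp [s, e, eq_comm]
  subst ho'_centroid hF_image
  have horth (i : Fin n) (hi : i ∉ s) (x : EuclideanSpace ℝ (Fin n))
      (hx : x ∈ affineSpan ℝ (e '' s)) : ⟪e i - s.centroid ℝ e, x - s.centroid ℝ e⟫ = 0 :=
    inner_sub_eq_zero_of_mem_affineSpan
      (by rintro _ ⟨j, hj, rfl⟩; exact EuclideanSpace.inner_single_sub_centroid_single hs hi hj)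
      hx (centroid_mem_affineSpan_image hs e)
  refine ⟨centroid_mem_affineSpan_image hs e,
    fun i hi x hx => horth i (by simpa [s] using hi) x hx, fun q hq => ?_⟩
  refine Real.rpow_le_rpow (sum_nonneg fun _ _ => by positivity) ?_ (by positivity)
  rw [← sum_filter_add_sum_filter_not univ (fun i : Fin n => (i : ℕ) < c),
    ← sum_filter_add_sum_filter_not univ (fun i : Fin n => (i : ℕ) < c)]
  refine add_le_add (sum_dist_centroid_rpow_le
    (fun i hi => EuclideanSpace.dist_centroid_single_one hs hi) hρ q) (sum_le_sum fun i hi => ?_)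
  have hi : i ∉ s := by simpa [s] using hi
  exact Real.rpow_le_rpow dist_nonneg (dist_le_dist_of_inner_sub_eq_zero (horth i hi q hq))
    (by linarith)
end

section
/- If for all n ≥ c the inequality (c/n)·((c-1)/c)^{ρ/2} + ((n-c)/n)·((c+1)/c)^{ρ/2} ≤ (1+ε)^ρ·((n-1)/n)^{ρ/2} holds, then ((c+1)/c)^{ρ/2} ≤ (1+ε)^ρ, and hence c ≥ 1/(2ε + ε²). -/
/-! Dropping the nonnegative first term and bounding `((n - 1)/n)^(ρ/2)` by `1` leaves
`((n - c)/n) · ((c + 1)/c)^(ρ/2) ≤ (1 + ε)^ρ`; letting `n → ∞` gives the first claim, and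
taking `ρ/2`-th roots gives `1 + 1/c ≤ (1 + ε)^2`, i.e. the second. -/

open Filter Topology

theorem tendsto_natCast_sub_div_atTop (c : ℝ) :
    Tendsto (fun n : ℕ => ((n : ℝ) - c) / n) atTop (𝓝 1) := by
  have h : Tendsto (fun n : ℕ => 1 - c / n) atTop (𝓝 (1 - 0)) :=
    tendsto_const_nhds.sub (tendsto_const_div_atTop_nhds_zero_nat c)
  rw [sub_zero] at h
  refine h.congr' ?_
  filter_upwards [eventually_gt_atTop 0] with n hn
  have hn : (n : ℝ) ≠ 0 := by positivity
  field_simp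

theorem le_of_eventually_natCast_sub_div_mul_le {c a b : ℝ}
    (h : ∀ᶠ n : ℕ in atTop, ((n : ℝ) - c) / n * a ≤ b) : a ≤ b := by
  have hlim := (tendsto_natCast_sub_div_atTop c).mul_const a
  rw [one_mul] at hlim
  exact le_of_tendsto hlim h

theorem natCast_sub_one_div_rpow_le_one (n : ℕ) {y : ℝ} (hy : 0 ≤ y) :
    (((n : ℝ) - 1) / n) ^ y ≤ 1 := by
  rcases Nat.eq_zero_or_pos n with rfl | hn
  · simpa using Real.zero_rpow_le_one y
  have hn : (1 : ℝ) ≤ n := by exact_mod_cast hn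
  refine Real.rpow_le_one (div_nonneg (by linarith) (by linarith)) ?_ hy
  exact div_le_one_of_le₀ (by linarith) (by linarith)

theorem Real.rpow_half_le_rpow_iff_le_sq {x a ρ : ℝ} (hx : 0 ≤ x) (ha : 0 ≤ a) (hρ : 0 < ρ) :
    x ^ (ρ / 2) ≤ a ^ ρ ↔ x ≤ a ^ 2 := by
  have h : a ^ ρ = (a ^ 2) ^ (ρ / 2) := by
    rw [← Real.rpow_natCast, ← Real.rpow_mul ha]
    ring_nf
  rw [h, Real.rpow_le_rpow_iff hx (by positivity) (by positivity)]

theorem one_div_le_of_add_one_div_le_one_add_sq {c ε : ℝ} (hc : 0 < c) (hε : 0 < ε)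
    (h : (c + 1) / c ≤ (1 + ε) ^ 2) : 1 / (2 * ε + ε ^ 2) ≤ c := by
  have hinv : 1 / c ≤ 2 * ε + ε ^ 2 := by
    rw [add_div, div_self hc.ne'] at h
    linarith
  exact (one_div_le (by positivity) hc).mpr hinv

theorem simplex_coreset_lower_bound_limit_general (c : ℕ) (hc : 1 ≤ c) (ρ : ℝ) (hρ : 1 ≤ ρ)
    (ε : ℝ) (hε0 : 0 < ε)
    (h : ∀ n : ℕ, c ≤ n →
      ((c : ℝ)/n) * (((c - 1 : ℝ)/c) ^ (ρ/2))
        + (((n : ℝ) - c)/n) * (((c + 1 : ℝ)/c) ^ (ρ/2))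
      ≤ (1 + ε) ^ ρ * (((n - 1 : ℝ)/n) ^ (ρ/2))) :
    ((c + 1 : ℝ)/c) ^ (ρ/2) ≤ (1 + ε) ^ ρ ∧ (1 / (2*ε + ε^2) : ℝ) ≤ c := by
  have hc0 : (0 : ℝ) < c := by exact_mod_cast hc
  have hlimit : ((c + 1 : ℝ)/c) ^ (ρ/2) ≤ (1 + ε) ^ ρ := by
    refine le_of_eventually_natCast_sub_div_mul_le (c := c) ?_
    filter_upwards [eventually_ge_atTop c] with n hn
    have hfirst : 0 ≤ ((c : ℝ)/n) * (((c - 1 : ℝ)/c) ^ (ρ/2)) :=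
      mul_nonneg (by positivity) (Real.rpow_nonneg (div_nonneg (by simpa using hc) hc0.le) _)
    calc ((n : ℝ) - c) / n * ((c + 1 : ℝ)/c) ^ (ρ/2)
        ≤ (1 + ε) ^ ρ * (((n - 1 : ℝ)/n) ^ (ρ/2)) :=
          (le_add_of_nonneg_left hfirst).trans (h n hn)
      _ ≤ (1 + ε) ^ ρ :=
          mul_le_of_le_one_right (by positivity) (natCast_sub_one_div_rpow_le_one n (by linarith))
  refine ⟨hlimit, one_div_le_of_add_one_div_le_one_add_sq hc0 hε0 ?_⟩
  exact (Real.rpow_half_le_rpow_iff_le_sq (by positivity) (by linarith) (by linarith)).mp hlimit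

theorem simplex_coreset_lower_bound_limit (c : ℕ) (hc : 1 ≤ c) (ρ : ℝ) (hρ : 1 ≤ ρ)
    (ε : ℝ) (hε0 : 0 < ε) (hε1 : ε ≤ 1)
    (h : ∀ n : ℕ, c ≤ n →
      ((c : ℝ)/n) * (((c - 1 : ℝ)/c) ^ (ρ/2))
        + (((n : ℝ) - c)/n) * (((c + 1 : ℝ)/c) ^ (ρ/2))
      ≤ (1 + ε) ^ ρ * (((n - 1 : ℝ)/n) ^ (ρ/2))) :
    ((c + 1 : ℝ)/c) ^ (ρ/2) ≤ (1 + ε) ^ ρ ∧ (1 / (2*ε + ε^2) : ℝ) ≤ c :=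
  simplex_coreset_lower_bound_limit_general c hc ρ hρ ε hε0 h
end

section
/- For every ε with 0 < ε ≤ 1, there is no subset S of the vertices of the standard (n-1)-simplex with |S| < 1/(3ε) whose affine span contains an ε-approximate center, for n sufficiently large. That is, the coreset size for the ρ-median/center of the standard simplex is Ω(1/ε). -/
/-!
A point `x` of the affine span of `{eᵢ : i ∈ S}` has coordinates supported on `S` and summing
to `1`, so by Cauchy–Schwarz `‖x‖² ≥ 1/|S|` and every vertex `eᵢ` with `i ∉ S` lies at distance
`‖x - eᵢ‖ = √(1 + ‖x‖²) ≥ √(1 + 1/|S|)` from it. Comparing with the origin, whose cost is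
`n^(1/ρ)`, the cost of `x` is at least `(n - |S|)^(1/ρ) √(1 + 1/|S|)`. When `|S| < 1/(3ε)`
the factor `√(1 + 1/|S|)` exceeds `1 + ε` by a margin of order `ε`, which beats the loss
`(1 - |S|/n)^(1/ρ)` as soon as `n ≳ 1/ε²`.
-/
open Finset

section Simplex

variable {ι : Type*} [Fintype ι] [DecidableEq ι]

theorem apply_eq_zero_and_sum_eq_one_of_mem_affineSpan_single {S : Finset ι}
    {x : EuclideanSpace ℝ ι}
    (hx : x ∈ affineSpan ℝ {x | ∃ i ∈ S, x = EuclideanSpace.single i (1:ℝ)}) :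
    (∀ j ∉ S, x j = 0) ∧ ∑ j ∈ S, x j = 1 := by
  refine affineSpan_induction hx ?_ fun c u v w hu hv hw => ⟨fun j hj => ?_, ?_⟩
  · rintro _ ⟨i, hi, rfl⟩
    refine ⟨fun j hj => ?_, ?_⟩
    · simp [show j ≠ i by rintro rfl; exact hj hi]
    · simp [hi]
  · simp [hu.1 j hj, hv.1 j hj, hw.1 j hj]
  · simp [sum_add_distrib, ← mul_sum, sum_sub_distrib, hu.2, hv.2, hw.2]

theorem one_add_inv_card_le_dist_single_sq {S : Finset ι} {x : EuclideanSpace ℝ ι} {i : ι}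
    (hi : x i = 0) (hS : ∑ j ∈ S, x j = 1) :
    1 + 1 / #S ≤ dist x (EuclideanSpace.single i (1:ℝ)) ^ 2 := by
  have hnorm : 1 / #S ≤ ‖x‖ ^ 2 := calc
    1 / #S ≤ ∑ j ∈ S, x j ^ 2 := by
      refine div_le_of_le_mul₀ (Nat.cast_nonneg _) (sum_nonneg fun j _ => sq_nonneg _) ?_
      simpa [hS, mul_comm] using sq_sum_le_card_mul_sum_sq (s := S) (f := fun j => x j)
    _ ≤ ∑ j, x j ^ 2 := sum_le_sum_of_subset_of_nonneg (subset_univ S) fun j _ _ => sq_nonneg _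
    _ = ‖x‖ ^ 2 := by simp [EuclideanSpace.norm_sq_eq]
  rw [dist_eq_norm, norm_sub_sq_real, EuclideanSpace.inner_single_right, PiLp.norm_single]
  simp only [hi, conj_trivial, mul_zero, norm_one]
  linarith

end Simplex

section Cost

variable {ι E : Type*} [Fintype ι] [PseudoMetricSpace E]

/-- The cost `δ` of the paper, for the finite point family `p`. -/
noncomputable def rhoCost (ρ : ℝ) (p : ι → E) (q : E) : ℝ :=
  (∑ i, dist q (p i) ^ ρ) ^ (1 / ρ)

theorem rhoCost_nonneg (ρ : ℝ) (p : ι → E) (q : E) : 0 ≤ rhoCost ρ p q :=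
  Real.rpow_nonneg (sum_nonneg fun _ _ => Real.rpow_nonneg dist_nonneg _) _

theorem sInf_range_rhoCost_le (ρ : ℝ) (p : ι → E) (q : E) :
    sInf (Set.range (rhoCost ρ p)) ≤ rhoCost ρ p q :=
  csInf_le ⟨0, Set.forall_mem_range.2 (rhoCost_nonneg ρ p)⟩ ⟨q, rfl⟩

theorem card_rpow_mul_le_rhoCost {ρ a : ℝ} (hρ : 0 < ρ) (ha : 0 ≤ a) {p : ι → E} {q : E}
    (T : Finset ι) (hT : ∀ i ∈ T, a ≤ dist q (p i)) :
    (#T : ℝ) ^ (1 / ρ) * a ≤ rhoCost ρ p q := by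
  have hsum : #T * a ^ ρ ≤ ∑ i, dist q (p i) ^ ρ := calc
    #T * a ^ ρ = ∑ i ∈ T, a ^ ρ := by simp
    _ ≤ ∑ i ∈ T, dist q (p i) ^ ρ :=
      sum_le_sum fun i hi => Real.rpow_le_rpow ha (hT i hi) hρ.le
    _ ≤ ∑ i, dist q (p i) ^ ρ := sum_le_sum_of_subset_of_nonneg (subset_univ T)
      fun i _ _ => Real.rpow_nonneg dist_nonneg _
  calc (#T : ℝ) ^ (1 / ρ) * a = (#T * a ^ ρ) ^ (1 / ρ) := by
        rw [Real.mul_rpow (Nat.cast_nonneg _) (Real.rpow_nonneg ha _), ← Real.rpow_mul ha,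
          mul_one_div_cancel hρ.ne', Real.rpow_one]
    _ ≤ rhoCost ρ p q := Real.rpow_le_rpow (by positivity) hsum (by positivity)

theorem rhoCost_single_zero [DecidableEq ι] (ρ : ℝ) :
    rhoCost ρ (fun i : ι => EuclideanSpace.single i (1:ℝ)) 0 = (Fintype.card ι : ℝ) ^ (1 / ρ) := by
  simp [rhoCost, dist_eq_norm, PiLp.norm_single]

end Cost

theorem one_add_two_fifths_mul_le_sqrt_one_add {u : ℝ} (h0 : 0 ≤ u) (h1 : u ≤ 5 / 4) :
    1 + 2 * u / 5 ≤ √(1 + u) :=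
  Real.le_sqrt_of_sq_le (by nlinarith)

theorem rpow_mul_div_le_rpow {x z p : ℝ} (hx : 0 < x) (hz : 0 ≤ z) (hzx : z ≤ x) (hp : p ≤ 1) :
    x ^ p * (z / x) ≤ z ^ p := calc
  x ^ p * (z / x) ≤ x ^ p * (z / x) ^ p := by
    gcongr
    exact Real.self_le_rpow_of_le_one (by positivity) ((div_le_one hx).2 hzx) hp
  _ = z ^ p := by rw [← Real.mul_rpow hx.le (by positivity), mul_div_cancel₀ z hx.ne']

theorem one_add_mul_rpow_lt_sub_rpow_mul_sqrt {ε ρ n k : ℝ} (hε : 0 < ε) (hρ : 1 ≤ ρ)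
    (hk : 1 ≤ k) (hεk : 3 * ε * k < 1) (hn : 3 ≤ ε ^ 2 * n) :
    (1 + ε) * n ^ (1 / ρ) < (n - k) ^ (1 / ρ) * √(1 + 1 / k) := by
  have hn0 : 0 < n := by nlinarith
  have hkn : 9 * k ≤ ε * n := by nlinarith
  have hnk : 0 ≤ n - k := by nlinarith
  have hA : 1 + 6 * ε / 5 ≤ √(1 + 1 / k) := by
    have hu : 3 * ε < 1 / k := by rwa [lt_div_iff₀ (by linarith)]
    have hu1 : 1 / k ≤ 1 := (div_le_one (by linarith)).2 hk
    linarith [one_add_two_fifths_mul_le_sqrt_one_add (u := 1 / k) (by positivity) (by linarith)]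
  have hscale : 1 + ε < (n - k) / n * (1 + 6 * ε / 5) := by
    rw [sub_div, div_self hn0.ne']
    have : k / n ≤ ε / 9 := by rw [div_le_iff₀ hn0]; linarith
    nlinarith
  have hpow : n ^ (1 / ρ) * ((n - k) / n) ≤ (n - k) ^ (1 / ρ) :=
    rpow_mul_div_le_rpow hn0 hnk (by linarith) ((div_le_one (by linarith)).2 hρ)
  calc (1 + ε) * n ^ (1 / ρ) < (n - k) / n * (1 + 6 * ε / 5) * n ^ (1 / ρ) := by
        gcongr
    _ = n ^ (1 / ρ) * ((n - k) / n) * (1 + 6 * ε / 5) := by ring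
    _ ≤ (n - k) ^ (1 / ρ) * √(1 + 1 / k) := by gcongr

open Finset in
theorem simplex_coreset_lower_bound_general (ε ρ : ℝ) (hε0 : 0 < ε) (hρ : 1 ≤ ρ) :
    ∃ N : ℕ, ∀ n : ℕ, N ≤ n →
      ∀ S : Finset (Fin n), (S.card : ℝ) < 1 / (3 * ε) →
        ∀ o' : EuclideanSpace ℝ (Fin n),
          o' ∈ affineSpan ℝ {x | ∃ i ∈ S, x = EuclideanSpace.single i (1:ℝ)} →
          ¬ ((∑ i, dist o' (EuclideanSpace.single i (1:ℝ)) ^ ρ) ^ (1/ρ)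
              ≤ (1 + ε) * sInf (Set.range fun q : EuclideanSpace ℝ (Fin n) =>
                  (∑ i, dist q (EuclideanSpace.single i (1:ℝ)) ^ ρ) ^ (1/ρ))) := by
  obtain ⟨N, hN⟩ := exists_nat_ge (3 / ε ^ 2)
  refine ⟨N, fun n hn S hS o' ho' hle => ?_⟩
  change rhoCost ρ _ o' ≤ (1 + ε) * sInf (Set.range (rhoCost ρ _)) at hle
  obtain ⟨hzero, hsum⟩ := apply_eq_zero_and_sum_eq_one_of_mem_affineSpan_single ho'
  have hk : (1 : ℝ) ≤ #S := by
    rcases S.eq_empty_or_nonempty with rfl | hne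
    · simp at hsum
    · exact_mod_cast hne.card_pos
  have hfar : ∀ i ∈ Sᶜ, √(1 + 1 / #S) ≤ dist o' (EuclideanSpace.single i (1:ℝ)) := fun i hi =>
    (Real.sqrt_le_left dist_nonneg).2
      (one_add_inv_card_le_dist_single_sq (hzero i (mem_compl.1 hi)) hsum)
  have hlow := card_rpow_mul_le_rhoCost (ρ := ρ) (by linarith) (Real.sqrt_nonneg _) Sᶜ hfar
  rw [card_compl, Fintype.card_fin, Nat.cast_sub (card_finset_fin_le S)] at hlow
  have hup := sInf_range_rhoCost_le ρ (fun i : Fin n => EuclideanSpace.single i (1:ℝ)) 0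
  rw [rhoCost_single_zero, Fintype.card_fin] at hup
  have hkey := one_add_mul_rpow_lt_sub_rpow_mul_sqrt (n := n) hε0 hρ hk
    (by rwa [lt_div_iff₀ (by positivity), mul_comm] at hS)
    ((div_le_iff₀' (by positivity)).1 (hN.trans (Nat.cast_le.2 hn)))
  exact (hle.trans (mul_le_mul_of_nonneg_left hup (by linarith))).not_gt (hkey.trans_le hlow)

open Finset in
theorem simplex_coreset_lower_bound (ε ρ : ℝ) (hε0 : 0 < ε) (hε1 : ε ≤ 1) (hρ : 1 ≤ ρ) :
    ∃ N : ℕ, ∀ n : ℕ, N ≤ n →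
      ∀ S : Finset (Fin n), (S.card : ℝ) < 1 / (3 * ε) →
        ∀ o' : EuclideanSpace ℝ (Fin n),
          o' ∈ affineSpan ℝ {x | ∃ i ∈ S, x = EuclideanSpace.single i (1:ℝ)} →
          ¬ ((∑ i, dist o' (EuclideanSpace.single i (1:ℝ)) ^ ρ) ^ (1/ρ)
              ≤ (1 + ε) * sInf (Set.range fun q : EuclideanSpace ℝ (Fin n) =>
                  (∑ i, dist q (EuclideanSpace.single i (1:ℝ)) ^ ρ) ^ (1/ρ))) :=
  simplex_coreset_lower_bound_general ε ρ hε0 hρ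
end

section
/- Let c, s, o be points in R^d with d(c, s) ≥ (1+ε)·d(o, s), and let c' be the point on the segment [c, s] closest to o. Then d(c', o) ≤ (1 - ε/2)·d(c, o). -/
/-!
With `μ = 1/(1+ε)`, compare `c'` with the point `x = μ² c + (1 - μ²) s` of the segment. For
`a + b = 1`, `‖a u + b w‖² = a‖u‖² + b‖w‖² - ab‖u - w‖²`; with `u = o - c`, `w = o - s` and
`d(o, s) ≤ μ d(c, s)`, the weight `b = 1 - μ²` makes the `d(c, s)²` terms cancel, leaving
`d(o, x) ≤ μ d(o, c)`. Finally `1/(1+ε) ≤ 1 - ε/2` for `ε ≤ 1`.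
-/

section InnerProductSpace

variable {E : Type*} [NormedAddCommGroup E] [InnerProductSpace ℝ E]

theorem norm_smul_add_smul_sq {a b : ℝ} (hab : a + b = 1) (u w : E) :
    ‖a • u + b • w‖ ^ 2 = a * ‖u‖ ^ 2 + b * ‖w‖ ^ 2 - a * b * ‖u - w‖ ^ 2 := by
  obtain rfl := eq_sub_of_add_eq' hab
  simp only [← real_inner_self_eq_norm_sq, inner_add_left, inner_add_right, inner_sub_left,
    inner_sub_right, real_inner_smul_left, real_inner_smul_right, real_inner_comm u w]
  ring

theorem infDist_segment_le_mul_dist {c s o : E} {μ : ℝ} (hμ0 : 0 ≤ μ) (hμ1 : μ ≤ 1)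
    (h : dist o s ≤ μ * dist c s) :
    Metric.infDist o (segment ℝ c s) ≤ μ * dist o c := by
  set x := μ ^ 2 • c + (1 - μ ^ 2) • s
  have hx : x ∈ segment ℝ c s :=
    ⟨μ ^ 2, 1 - μ ^ 2, by positivity, by nlinarith, by ring, rfl⟩
  have hox : o - x = μ ^ 2 • (o - c) + (1 - μ ^ 2) • (o - s) := by
    simp only [x, smul_sub, sub_smul, one_smul]
    abel
  have hsq : dist o x ^ 2 ≤ (μ * dist o c) ^ 2 := by
    have hcs : o - c - (o - s) = s - c := by abel
    rw [dist_eq_norm, hox, norm_smul_add_smul_sq (by ring), hcs, ← dist_eq_norm,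
      ← dist_eq_norm, ← dist_eq_norm, dist_comm s c]
    have hos : dist o s ^ 2 ≤ μ ^ 2 * dist c s ^ 2 := by
      rw [← mul_pow]; gcongr
    nlinarith [mul_le_mul_of_nonneg_left hos (by nlinarith : (0 : ℝ) ≤ 1 - μ ^ 2)]
  calc Metric.infDist o (segment ℝ c s) ≤ dist o x := Metric.infDist_le_dist_of_mem hx
    _ ≤ μ * dist o c := abs_le_of_sq_le_sq' hsq (by positivity) |>.2

end InnerProductSpace

theorem inv_one_add_le_one_sub_half {ε : ℝ} (hε0 : 0 ≤ ε) (hε1 : ε ≤ 1) :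
    (1 + ε)⁻¹ ≤ 1 - ε / 2 := by
  rw [inv_le_iff_one_le_mul₀ (by positivity)]
  nlinarith

theorem segment_projection_progress_general (d : ℕ) (c s o c' : EuclideanSpace ℝ (Fin d))
    (ε : ℝ) (hε0 : 0 < ε) (hε1 : ε ≤ 1)
    (hfar : (1 + ε) * dist o s ≤ dist c s)
    (hc'min : dist o c' = Metric.infDist o (segment ℝ c s)) :
    dist c' o ≤ (1 - ε/2) * dist c o := by
  have hpos : 0 < 1 + ε := by linarith
  have hclose : dist o s ≤ (1 + ε)⁻¹ * dist c s := by
    rw [inv_mul_eq_div, le_div_iff₀ hpos, mul_comm]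
    exact hfar
  calc dist c' o = Metric.infDist o (segment ℝ c s) := by rw [dist_comm, hc'min]
    _ ≤ (1 + ε)⁻¹ * dist o c :=
      infDist_segment_le_mul_dist (by positivity) (inv_le_one_of_one_le₀ (by linarith)) hclose
    _ ≤ (1 - ε / 2) * dist c o := by
      rw [dist_comm o c]
      gcongr
      exact inv_one_add_le_one_sub_half hε0.le hε1

theorem segment_projection_progress (d : ℕ) (c s o c' : EuclideanSpace ℝ (Fin d))
    (ε : ℝ) (hε0 : 0 < ε) (hε1 : ε ≤ 1)
    (hfar : (1 + ε) * dist o s ≤ dist c s)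
    (hc'mem : c' ∈ segment ℝ c s)
    (hc'min : dist o c' = Metric.infDist o (segment ℝ c s)) :
    dist c' o ≤ (1 - ε/2) * dist c o :=
  segment_projection_progress_general d c s o c' ε hε0 hε1 hfar hc'min
end

section
/- Suppose a map π̂: R^d → R^m satisfies: (a) for every subset S ⊆ P there is a q-flat F with (Σ_{p∈S} d(p,F)^ρ)^{1/ρ} ≤ (1+ε/2)·f_1^q(S,ρ) and (1±ε/3)-preservation of point-to-F distances under π̂; and (b) symmetrically for subsets of π̂(P). Then for all S ⊆ P, (1-ε)·f_1^q(S,ρ) ≤ f_1^q(π̂(S),ρ) ≤ (1+ε)·f_1^q(S,ρ). -/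
open Finset in
/-- `f1 q ρ S`: the minimal `L_ρ` cost of fitting a single `q`-dimensional affine flat to `S`. -/
noncomputable def f1 {V : Type*} [NormedAddCommGroup V] [InnerProductSpace ℝ V]
    (q : ℕ) (ρ : ℝ) (S : Finset V) : ℝ :=
  sInf {y : ℝ | ∃ F : AffineSubspace ℝ V, (F : Set V).Nonempty ∧
    Module.finrank ℝ F.direction = q ∧
    y = (∑ p ∈ S, Metric.infDist p (F : Set V) ^ ρ) ^ (1/ρ)}

/-! The image under `π` of the flat given by (a) is a candidate flat for `π(S)`: by (a) its
cost is at most `(1 + ε/3)(1 + ε/2) ≤ 1 + ε` times `f₁(S)`, and points of `S` with a common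
image only lower the cost of `π(S)`. Symmetrically the flat given by (b) is a candidate for
`S`, whence `(1 - ε/3) f₁(S) ≤ (1 + ε/2) f₁(π(S))`, and `(1 - ε)(1 + ε/2) ≤ 1 - ε/3`. -/

open Finset Metric

section RpowSum

variable {ι : Type*} {ρ c : ℝ} {s : Finset ι} {a b : ι → ℝ}

lemma rpow_sum_rpow_le_rpow_sum_rpow (hρ : 0 < ρ) (ha : ∀ i ∈ s, 0 ≤ a i)
    (hab : ∀ i ∈ s, a i ≤ b i) :
    (∑ i ∈ s, a i ^ ρ) ^ (1 / ρ) ≤ (∑ i ∈ s, b i ^ ρ) ^ (1 / ρ) :=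
  Real.rpow_le_rpow (sum_nonneg fun i hi => Real.rpow_nonneg (ha i hi) _)
    (sum_le_sum fun i hi => Real.rpow_le_rpow (ha i hi) (hab i hi) hρ.le) (by positivity)

lemma rpow_sum_mul_rpow (hρ : ρ ≠ 0) (hc : 0 ≤ c) (ha : ∀ i ∈ s, 0 ≤ a i) :
    (∑ i ∈ s, (c * a i) ^ ρ) ^ (1 / ρ) = c * (∑ i ∈ s, a i ^ ρ) ^ (1 / ρ) := by
  rw [sum_congr rfl fun i hi => Real.mul_rpow hc (ha i hi), ← mul_sum,
    Real.mul_rpow (Real.rpow_nonneg hc _) (sum_nonneg fun i hi => Real.rpow_nonneg (ha i hi) _),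
    one_div, Real.rpow_rpow_inv hc hρ]

lemma rpow_sum_rpow_le_mul_of_le (hρ : 0 < ρ) (hc : 0 ≤ c) (ha : ∀ i ∈ s, 0 ≤ a i)
    (hb : ∀ i ∈ s, 0 ≤ b i) (h : ∀ i ∈ s, a i ≤ c * b i) :
    (∑ i ∈ s, a i ^ ρ) ^ (1 / ρ) ≤ c * (∑ i ∈ s, b i ^ ρ) ^ (1 / ρ) := by
  rw [← rpow_sum_mul_rpow hρ.ne' hc hb]
  exact rpow_sum_rpow_le_rpow_sum_rpow hρ ha h

lemma mul_rpow_sum_rpow_le_of_le (hρ : 0 < ρ) (hc : 0 ≤ c) (ha : ∀ i ∈ s, 0 ≤ a i)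
    (h : ∀ i ∈ s, c * a i ≤ b i) :
    c * (∑ i ∈ s, a i ^ ρ) ^ (1 / ρ) ≤ (∑ i ∈ s, b i ^ ρ) ^ (1 / ρ) := by
  rw [← rpow_sum_mul_rpow hρ.ne' hc ha]
  exact rpow_sum_rpow_le_rpow_sum_rpow hρ (fun i hi => mul_nonneg hc (ha i hi)) h

end RpowSum

section SingleFlat

variable {V W : Type*} {q : ℕ} {ρ : ℝ}

lemma f1_nonneg [NormedAddCommGroup V] [InnerProductSpace ℝ V] (S : Finset V) : 0 ≤ f1 q ρ S :=
  Real.sInf_nonneg <| by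
    rintro _ ⟨F, -, -, rfl⟩
    exact Real.rpow_nonneg (sum_nonneg fun p _ => Real.rpow_nonneg infDist_nonneg _) _

lemma f1_le [NormedAddCommGroup V] [InnerProductSpace ℝ V] (S : Finset V)
    {F : AffineSubspace ℝ V} (hF : (F : Set V).Nonempty)
    (hq : Module.finrank ℝ F.direction = q) :
    f1 q ρ S ≤ (∑ p ∈ S, infDist p (F : Set V) ^ ρ) ^ (1 / ρ) := by
  refine csInf_le ⟨0, ?_⟩ ⟨F, hF, hq, rfl⟩
  rintro _ ⟨G, -, -, rfl⟩
  exact Real.rpow_nonneg (sum_nonneg fun p _ => Real.rpow_nonneg infDist_nonneg _) _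

lemma f1_image_le [NormedAddCommGroup W] [InnerProductSpace ℝ W] [DecidableEq W] (hρ : 0 < ρ)
    (f : V → W) (S : Finset V)
    {G : AffineSubspace ℝ W} (hG : (G : Set W).Nonempty)
    (hq : Module.finrank ℝ G.direction = q) :
    f1 q ρ (S.image f) ≤ (∑ p ∈ S, infDist (f p) (G : Set W) ^ ρ) ^ (1 / ρ) :=
  (f1_le _ hG hq).trans <|
    Real.rpow_le_rpow (sum_nonneg fun _ _ => Real.rpow_nonneg infDist_nonneg _)
      (sum_image_le_of_nonneg fun _ _ => Real.rpow_nonneg infDist_nonneg _) (by positivity)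

lemma f1_image_le_mul_of_infDist_le [PseudoMetricSpace V]
    [NormedAddCommGroup W] [InnerProductSpace ℝ W] [DecidableEq W] (hρ : 0 < ρ)
    (f : V → W) (S : Finset V)
    {G : AffineSubspace ℝ W} (hG : (G : Set W).Nonempty)
    (hq : Module.finrank ℝ G.direction = q) (F : Set V) {β : ℝ} (hβ : 0 ≤ β)
    (hdist : ∀ p ∈ S, infDist (f p) (G : Set W) ≤ β * infDist p F) :
    f1 q ρ (S.image f) ≤ β * (∑ p ∈ S, infDist p F ^ ρ) ^ (1 / ρ) :=
  (f1_image_le hρ f S hG hq).trans <|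
    rpow_sum_rpow_le_mul_of_le hρ hβ (fun _ _ => infDist_nonneg) (fun _ _ => infDist_nonneg) hdist

lemma mul_f1_le_of_mul_infDist_le [NormedAddCommGroup V] [InnerProductSpace ℝ V]
    [PseudoMetricSpace W] (hρ : 0 < ρ) (f : V → W) (S : Finset V)
    {F : AffineSubspace ℝ V} (hF : (F : Set V).Nonempty)
    (hq : Module.finrank ℝ F.direction = q) (G : Set W) {γ : ℝ} (hγ : 0 ≤ γ)
    (hdist : ∀ p ∈ S, γ * infDist p (F : Set V) ≤ infDist (f p) G) :
    γ * f1 q ρ S ≤ (∑ p ∈ S, infDist (f p) G ^ ρ) ^ (1 / ρ) :=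
  (mul_le_mul_of_nonneg_left (f1_le S hF hq) hγ).trans <|
    mul_rpow_sum_rpow_le_of_le hρ hγ (fun _ _ => infDist_nonneg) hdist

end SingleFlat

lemma one_add_div_three_mul_one_add_div_two_le {ε : ℝ} (h0 : 0 ≤ ε) (h1 : ε ≤ 1) :
    (1 + ε / 3) * (1 + ε / 2) ≤ 1 + ε := by
  nlinarith

lemma one_sub_mul_one_add_div_two_le {ε : ℝ} (h0 : 0 ≤ ε) :
    (1 - ε) * (1 + ε / 2) ≤ 1 - ε / 3 := by
  nlinarith

open Finset in
theorem single_flat_cost_preserved (d m q : ℕ) (ρ : ℝ) (hρ : 1 ≤ ρ)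
    (ε : ℝ) (hε0 : 0 < ε) (hε1 : ε < 1)
    [DecidableEq (EuclideanSpace ℝ (Fin m))]
    (π : EuclideanSpace ℝ (Fin d) →ₗ[ℝ] EuclideanSpace ℝ (Fin m))
    (P : Finset (EuclideanSpace ℝ (Fin d)))
    (ha : ∀ S ⊆ P, ∃ F : AffineSubspace ℝ (EuclideanSpace ℝ (Fin d)),
      (F : Set (EuclideanSpace ℝ (Fin d))).Nonempty ∧
      Module.finrank ℝ F.direction = q ∧
      Module.finrank ℝ (F.map π.toAffineMap).direction = q ∧
      (∑ p ∈ S, Metric.infDist p (F : Set (EuclideanSpace ℝ (Fin d))) ^ ρ) ^ (1/ρ)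
        ≤ (1 + ε/2) * f1 q ρ S ∧
      ∀ p ∈ S,
        (1 - ε/3) * Metric.infDist p (F : Set (EuclideanSpace ℝ (Fin d)))
          ≤ Metric.infDist (π p) ((F.map π.toAffineMap : AffineSubspace ℝ
              (EuclideanSpace ℝ (Fin m))) : Set (EuclideanSpace ℝ (Fin m))) ∧
        Metric.infDist (π p) ((F.map π.toAffineMap : AffineSubspace ℝ
              (EuclideanSpace ℝ (Fin m))) : Set (EuclideanSpace ℝ (Fin m)))
          ≤ (1 + ε/3) * Metric.infDist p (F : Set (EuclideanSpace ℝ (Fin d))))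
    (hb : ∀ S ⊆ P, ∃ F' : AffineSubspace ℝ (EuclideanSpace ℝ (Fin d)),
      (F' : Set (EuclideanSpace ℝ (Fin d))).Nonempty ∧
      Module.finrank ℝ F'.direction = q ∧
      Module.finrank ℝ (F'.map π.toAffineMap).direction = q ∧
      (∑ p ∈ S, Metric.infDist (π p) ((F'.map π.toAffineMap : AffineSubspace ℝ
              (EuclideanSpace ℝ (Fin m))) : Set (EuclideanSpace ℝ (Fin m))) ^ ρ) ^ (1/ρ)
        ≤ (1 + ε/2) * f1 q ρ (S.image π) ∧
      ∀ p ∈ S,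
        (1 - ε/3) * Metric.infDist p (F' : Set (EuclideanSpace ℝ (Fin d)))
          ≤ Metric.infDist (π p) ((F'.map π.toAffineMap : AffineSubspace ℝ
              (EuclideanSpace ℝ (Fin m))) : Set (EuclideanSpace ℝ (Fin m))) ∧
        Metric.infDist (π p) ((F'.map π.toAffineMap : AffineSubspace ℝ
              (EuclideanSpace ℝ (Fin m))) : Set (EuclideanSpace ℝ (Fin m)))
          ≤ (1 + ε/3) * Metric.infDist p (F' : Set (EuclideanSpace ℝ (Fin d)))) :
    ∀ S ⊆ P, (1 - ε) * f1 q ρ S ≤ f1 q ρ (S.image π) ∧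
      f1 q ρ (S.image π) ≤ (1 + ε) * f1 q ρ S := by
  intro S hS
  have hf1S := f1_nonneg (q := q) (ρ := ρ) S
  have hρ0 : 0 < ρ := by linarith
  refine ⟨?_, ?_⟩
  · obtain ⟨F', hne, hq, -, hcost, hdist⟩ := hb S hS
    have hlower : (1 - ε / 3) * f1 q ρ S ≤ (1 + ε / 2) * f1 q ρ (S.image π) :=
      (mul_f1_le_of_mul_infDist_le hρ0 π S hne hq _ (by linarith)
        fun p hp => (hdist p hp).1).trans hcost
    refine le_of_mul_le_mul_left ?_ (by linarith : 0 < 1 + ε / 2)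
    calc (1 + ε / 2) * ((1 - ε) * f1 q ρ S) = (1 - ε) * (1 + ε / 2) * f1 q ρ S := by ring
      _ ≤ (1 - ε / 3) * f1 q ρ S :=
        mul_le_mul_of_nonneg_right (one_sub_mul_one_add_div_two_le hε0.le) hf1S
      _ ≤ _ := hlower
  · obtain ⟨F, hne, -, hq, hcost, hdist⟩ := ha S hS
    calc f1 q ρ (S.image π)
        ≤ (1 + ε / 3) * (∑ p ∈ S, infDist p (F : Set _) ^ ρ) ^ (1 / ρ) :=
          f1_image_le_mul_of_infDist_le hρ0 π S
            (by rw [AffineSubspace.coe_map]; exact hne.image _) hq _ (by linarith)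
            fun p hp => (hdist p hp).2
      _ ≤ (1 + ε / 3) * ((1 + ε / 2) * f1 q ρ S) :=
          mul_le_mul_of_nonneg_left hcost (by linarith)
      _ ≤ (1 + ε) * f1 q ρ S := by
          rw [← mul_assoc]
          exact mul_le_mul_of_nonneg_right
            (one_add_div_three_mul_one_add_div_two_le hε0.le hε1.le) hf1S
end
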